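/- arXiv:2407.12253 — 7 statements merged into one kernel-verified Lean document; each statement's English description precedes it below -/
import Mathlib

section
/- Let A_ℓ and A_n be sets of positive integers, let g be a positive integer, and let a₀ ∈ A_ℓ. Let T = {c ∈ A_n : 1 ≤ c ≤ g and (c + a₀ ∉ A_ℓ or c + a₀ > g)}, let A'_n = A_n \ T, and let A'_ℓ = A_ℓ ∪ (T + a₀). Let S be a set of positive integers and let h be an integer with 1 ≤ h ≤ g. (i) If h ∈ S + A'_ℓ and h ∉ S + A_ℓ, then h − a₀ ∈ S + A_n and h − a₀ ∉ S + A'_n. (ii) If h ∈ S + A'_ℓ + A'_n, then h ∈ S + A_ℓ + A_n. -/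
/-- The sumset of two sets of positive integers: all integers of the form
`a + b` with `a ∈ A ∪ {0}` and `b ∈ B ∪ {0}`. -/
def sumset (A B : Set ℕ) : Set ℕ :=
  {n | ∃ a ∈ A ∪ {0}, ∃ b ∈ B ∪ {0}, n = a + b}

/-- The key lemma about the Dyson transform in Dyson's proof:
(i) if `h ∈ S + A'_ℓ` and `h ∉ S + A_ℓ`, then `h − a₀ ∈ S + A_n` and
`h − a₀ ∉ S + A'_n`; (ii) if `h ∈ S + A'_ℓ + A'_n`, then `h ∈ S + A_ℓ + A_n`. -/
theorem dyson_lemma_one (Al An S : Set ℕ)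
    (hAl : ∀ a ∈ Al, 0 < a) (hAn : ∀ a ∈ An, 0 < a) (hS : ∀ s ∈ S, 0 < s)
    (g : ℕ) (hg : 0 < g) (a₀ : ℕ) (ha₀ : a₀ ∈ Al)
    (T : Set ℕ)
    (hT : T = {c | c ∈ An ∧ 1 ≤ c ∧ c ≤ g ∧ (c + a₀ ∉ Al ∨ g < c + a₀)})
    (An' Al' : Set ℕ)
    (hAn' : An' = An \ T)
    (hAl' : Al' = Al ∪ (fun c => c + a₀) '' T)
    (h : ℕ) (hh1 : 1 ≤ h) (hh2 : h ≤ g) :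
    (h ∈ sumset S Al' → h ∉ sumset S Al →
      (h - a₀ ∈ sumset S An ∧ h - a₀ ∉ sumset S An')) ∧
    (h ∈ sumset (sumset S Al') An' → h ∈ sumset (sumset S Al) An) :=  by
  subst hT hAn' hAl'
  constructor
  · rintro ⟨s, hs, b, hb, rfl⟩ hnot
    have hbT : ∃ c, (c ∈ An ∧ 1 ≤ c ∧ c ≤ g ∧ (c + a₀ ∉ Al ∨ g < c + a₀)) ∧ b = c + a₀ := by
      rcases hb with (hb | ⟨c, hc, hcb⟩) | hb
      · exact absurd ⟨s, hs, b, Or.inl hb, rfl⟩ hnot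
      · exact ⟨c, hc, hcb.symm⟩
      · exact absurd ⟨s, hs, b, Or.inr hb, rfl⟩ hnot
    obtain ⟨c, hc, rfl⟩ := hbT
    constructor
    · exact ⟨s, hs, c, Or.inl hc.1, by omega⟩
    · rintro ⟨s', hs', c', hc', heq⟩
      rcases hc' with ⟨hc'An, hc'T⟩ | hc'0
      · have hc1 : 0 < c' := hAn c' hc'An
        have hcle : c' ≤ g := by omega
        have : c' + a₀ ∈ Al ∧ c' + a₀ ≤ g := by
          by_contra hcon
          rw [not_and_or, not_le] at hcon
          exact hc'T ⟨hc'An, by omega, hcle, hcon⟩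
        exact hnot ⟨s', hs', c' + a₀, Or.inl this.1, by omega⟩
      · simp only [Set.mem_singleton_iff] at hc'0
        subst hc'0
        exact hnot ⟨s', hs', a₀, Or.inl ha₀, by omega⟩
  · rintro ⟨x, hx, d, hd, rfl⟩
    have hd' : d ∈ An ∪ {0} := by
      rcases hd with hd | hd
      · exact Or.inl hd.1
      · exact Or.inr hd
    rcases hx with hx | hx0
    swap
    · simp only [Set.mem_singleton_iff] at hx0
      subst hx0
      exact ⟨0, Or.inr rfl, d, hd', rfl⟩
    obtain ⟨s, hs, b, hb, rfl⟩ := hx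
    rcases hb with (hbAl | ⟨c, hc, hcb⟩) | hb0
    · exact ⟨s + b, Or.inl ⟨s, hs, b, Or.inl hbAl, rfl⟩, d, hd', rfl⟩
    swap
    · exact ⟨s + b, Or.inl ⟨s, hs, b, Or.inr hb0, rfl⟩, d, hd', rfl⟩
    · simp only at hcb
      subst hcb
      obtain ⟨hcAn, hc1, hcg, hcor⟩ := hc
      rcases hd with ⟨hdAn, hdT⟩ | hd0
      · have hd1 : 0 < d := hAn d hdAn
        have hdg : d ≤ g := by omega
        have : d + a₀ ∈ Al ∧ d + a₀ ≤ g := by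
          by_contra hcon
          rw [not_and_or, not_le] at hcon
          exact hdT ⟨hdAn, by omega, hdg, hcon⟩
        exact ⟨s + (d + a₀), Or.inl ⟨s, hs, d + a₀, Or.inl this.1, rfl⟩,
          c, Or.inl hcAn, by omega⟩
      · simp only [Set.mem_singleton_iff] at hd0
        subst hd0
        exact ⟨s + a₀, Or.inl ⟨s, hs, a₀, Or.inl ha₀, rfl⟩, c, Or.inl hcAn, by omega⟩
end

section
/- Let n ≥ 2, let A₁, …, A_n be sets of positive integers, let g be a positive integer, let ℓ ∈ {1, …, n−1}, and let a₀ ∈ A_ℓ. Let T = {c ∈ A_n : 1 ≤ c ≤ g and (c + a₀ ∉ A_ℓ or c + a₀ > g)}, and define A'_n = A_n \ T, A'_ℓ = A_ℓ ∪ (T + a₀), and A'_i = A_i for all i ≠ ℓ, n. For r = 1, …, n, let φ_r(m) = Σ_I S_I(m) and φ'_r(m) = Σ_I S'_I(m), where the sums are over all r-element subsets I of {1, …, n}, S_I is the sumset of the sets A_i for i ∈ I, and S'_I is the sumset of the sets A'_i for i ∈ I. Then φ'_r(m) ≤ φ_r(m) for all m = 1, …, g and r = 1, …, n. -/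
/-- The counting function of a set of integers: `count A x` is the number of
elements `a ∈ A` with `1 ≤ a ≤ x`. -/
noncomputable def count (A : Set ℕ) (x : ℕ) : ℕ := (A ∩ Set.Icc 1 x).ncard

/-- The sumset `S_I = Σ_{i ∈ I} A_i` of the sets `A_i` for `i ∈ I`:
all integers of the form `Σ_{i ∈ I} a_i` with `a_i ∈ A_i ∪ {0}` for all `i ∈ I`. -/
def indexSumset {n : ℕ} (A : Fin n → Set ℕ) (I : Finset (Fin n)) : Set ℕ :=
  {x | ∃ f : Fin n → ℕ, (∀ i ∈ I, f i ∈ A i ∪ {0}) ∧ x = ∑ i ∈ I, f i}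

/-- The rank `r` counting function `φ_r(m) = Σ_{|I| = r} S_I(m)`, where the
sum is over all `r`-element subsets `I` of `{1, …, n}`. -/
noncomputable def phi {n : ℕ} (A : Fin n → Set ℕ) (r m : ℕ) : ℕ :=
  ∑ I ∈ Finset.powersetCard r (Finset.univ : Finset (Fin n)),
    count (indexSumset A I) m

/-! ### Auxiliary machinery -/

def plusSet (P S : Set ℕ) : Set ℕ := {x | ∃ a ∈ P ∪ {0}, ∃ s ∈ S, x = a + s}

lemma finite_inter (A : Set ℕ) (m : ℕ) : (A ∩ Set.Icc 1 m).Finite :=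
  (Set.finite_Icc 1 m).subset Set.inter_subset_right

lemma count_mono {A B : Set ℕ} (m : ℕ) (h : ∀ x ∈ A, x ≤ m → x ∈ B) :
    count A m ≤ count B m := by
  apply Set.ncard_le_ncard _ (finite_inter B m)
  rintro x ⟨hx, hx1, hx2⟩
  exact ⟨h x hx hx2, hx1, hx2⟩

lemma indexSumset_insert {n : ℕ} (A : Fin n → Set ℕ) (i : Fin n) (K : Finset (Fin n))
    (hi : i ∉ K) : indexSumset A (insert i K) = plusSet (A i) (indexSumset A K) := by
  ext x
  constructor
  · rintro ⟨f, hf, rfl⟩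
    exact ⟨f i, hf i (Finset.mem_insert_self i K),
      ∑ j ∈ K, f j, ⟨f, fun j hj => hf j (Finset.mem_insert_of_mem hj), rfl⟩,
      Finset.sum_insert hi⟩
  · rintro ⟨a, ha, s, ⟨f, hf, rfl⟩, rfl⟩
    refine ⟨Function.update f i a, ?_, ?_⟩
    · intro j hj
      rcases Finset.mem_insert.mp hj with rfl | hjK
      · simpa using ha
      · have hji : j ≠ i := fun h => hi (h ▸ hjK)
        rw [Function.update_of_ne hji]
        exact hf j hjK
    · rw [Finset.sum_insert hi, Function.update_self]
      congr 1
      refine Finset.sum_congr rfl fun j hjK => ?_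
      have hji : j ≠ i := fun h => hi (h ▸ hjK)
      exact (Function.update_of_ne hji _ _).symm

lemma indexSumset_congr {n : ℕ} {A A' : Fin n → Set ℕ} (K : Finset (Fin n))
    (h : ∀ i ∈ K, A i = A' i) : indexSumset A K = indexSumset A' K := by
  unfold indexSumset
  ext x
  constructor
  · rintro ⟨f, hf, rfl⟩
    exact ⟨f, fun i hi => (h i hi) ▸ (hf i hi), rfl⟩
  · rintro ⟨f, hf, rfl⟩
    exact ⟨f, fun i hi => (h i hi).symm ▸ (hf i hi), rfl⟩

lemma mem_image_swap {α : Type*} [DecidableEq α] (a b x : α) (I : Finset α) :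
    x ∈ I.image (Equiv.swap a b) ↔ Equiv.swap a b x ∈ I := by
  simp only [Finset.mem_image]
  constructor
  · rintro ⟨y, hy, rfl⟩; simpa [Equiv.swap_apply_self] using hy
  · intro h; exact ⟨_, h, Equiv.swap_apply_self _ _ _⟩

lemma image_swap_eq_of_iff {α : Type*} [DecidableEq α] {a b : α} {I : Finset α}
    (h : a ∈ I ↔ b ∈ I) : I.image (Equiv.swap a b) = I := by
  ext x
  rw [mem_image_swap]
  rcases eq_or_ne x a with rfl | hxa
  · rw [Equiv.swap_apply_left]; exact h.symm
  · rcases eq_or_ne x b with rfl | hxb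
    · rw [Equiv.swap_apply_right]; exact h
    · rw [Equiv.swap_apply_of_ne_of_ne hxa hxb]

lemma image_swap_eq_insert {α : Type*} [DecidableEq α] {a b : α} {I : Finset α}
    (hab : a ≠ b) (ha : a ∈ I) (hb : b ∉ I) :
    I.image (Equiv.swap a b) = insert b (I.erase a) := by
  ext x
  rw [mem_image_swap, Finset.mem_insert, Finset.mem_erase]
  rcases eq_or_ne x a with rfl | hxa
  · rw [Equiv.swap_apply_left]
    simp [hab, hb]
  · rcases eq_or_ne x b with rfl | hxb
    · rw [Equiv.swap_apply_right]
      simp [ha, hab.symm]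
    · rw [Equiv.swap_apply_of_ne_of_ne hxa hxb]
      simp [hxa, hxb]

section Key

variable {B C S : Set ℕ} {a₀ g : ℕ}

lemma both_key (ha₀ : a₀ ∈ B) (hC : ∀ c ∈ C, 0 < c)
    (T : Set ℕ)
    (hT : T = {c | c ∈ C ∧ 1 ≤ c ∧ c ≤ g ∧ (c + a₀ ∉ B ∨ g < c + a₀)})
    {x : ℕ} (hx : x ≤ g)
    (hmem : x ∈ plusSet (B ∪ (fun c => c + a₀) '' T) (plusSet (C \ T) S)) :
    x ∈ plusSet B (plusSet C S) := by
  obtain ⟨a, ha, y, ⟨d, hd, s, hs, rfl⟩, rfl⟩ := hmem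
  have hd' : d ∈ C ∪ {0} := by
    rcases hd with hd | hd
    · exact Or.inl hd.1
    · exact Or.inr hd
  rcases ha with (hab | ⟨c, hcT, hca⟩) | ha0
  · exact ⟨a, Or.inl hab, d + s, ⟨d, hd', s, hs, rfl⟩, rfl⟩
  · have hca2 : c + a₀ = a := by simpa using hca
    rw [hT] at hcT
    obtain ⟨hcC, hc1, hcg, -⟩ := hcT
    rcases hd with hdCT | hd0
    · have hdC : d ∈ C := hdCT.1
      have hd1 : 1 ≤ d := hC d hdC
      have hda : d + a₀ ≤ g := by omega
      have hdg : d ≤ g := by omega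
      have hdnT : ¬ (d + a₀ ∉ B ∨ g < d + a₀) := by
        intro hbad
        exact hdCT.2 (by rw [hT]; exact ⟨hdC, hd1, hdg, hbad⟩)
      push_neg at hdnT
      exact ⟨d + a₀, Or.inl hdnT.1, c + s, ⟨c, Or.inl hcC, s, hs, rfl⟩, by omega⟩
    · have hd0' : d = 0 := hd0
      subst hd0'
      exact ⟨a₀, Or.inl ha₀, c + s, ⟨c, Or.inl hcC, s, hs, rfl⟩, by omega⟩
  · have ha0' : a = 0 := ha0
    subst ha0'
    exact ⟨0, Or.inr rfl, d + s, ⟨d, hd', s, hs, rfl⟩, rfl⟩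

lemma pair_key {m : ℕ} (ha₀ : a₀ ∈ B) (hm : m ≤ g) (hC : ∀ c ∈ C, 0 < c)
    (T : Set ℕ)
    (hT : T = {c | c ∈ C ∧ 1 ≤ c ∧ c ≤ g ∧ (c + a₀ ∉ B ∨ g < c + a₀)}) :
    count (plusSet (B ∪ (fun c => c + a₀) '' T) S) m + count (plusSet (C \ T) S) m
      ≤ count (plusSet B S) m + count (plusSet C S) m := by
  set D₂ : Set ℕ := ((plusSet C S) ∩ Set.Icc 1 m) \ (plusSet (C \ T) S) with hD2
  set D₁ : Set ℕ :=
    ((plusSet (B ∪ (fun c => c + a₀) '' T) S) ∩ Set.Icc 1 m) \ (plusSet B S) with hD1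
  have hD1fin : D₁.Finite := (finite_inter _ m).subset Set.diff_subset
  have hD2fin : D₂.Finite := (finite_inter _ m).subset Set.diff_subset
  have key : ∀ x ∈ D₁, a₀ ≤ x ∧ x - a₀ ∈ D₂ := by
    rintro x ⟨⟨⟨a, ha, s, hs, rfl⟩, hx1, hx2⟩, hxB⟩
    rcases ha with (hab | ⟨c, hcT, hca⟩) | ha0
    · exact absurd ⟨a, Or.inl hab, s, hs, rfl⟩ hxB
    · have hca2 : c + a₀ = a := by simpa using hca
      rw [hT] at hcT
      obtain ⟨hcC, hc1, hcg, -⟩ := hcT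
      have ha₀le : a₀ ≤ a + s := by omega
      refine ⟨ha₀le, ?_⟩
      have hsub : a + s - a₀ = c + s := by omega
      rw [hsub]
      refine ⟨⟨⟨c, Or.inl hcC, s, hs, rfl⟩, by omega, by omega⟩, ?_⟩
      rintro ⟨d, hd, s', hs', heq⟩
      rcases hd with hdCT | hd0
      · have hdC : d ∈ C := hdCT.1
        have hd1 : 1 ≤ d := hC d hdC
        have hdnT : ¬ (d + a₀ ∉ B ∨ g < d + a₀) := by
          intro hbad
          exact hdCT.2 (by rw [hT]; exact ⟨hdC, hd1, by omega, hbad⟩)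
        push_neg at hdnT
        exact hxB ⟨d + a₀, Or.inl hdnT.1, s', hs', by omega⟩
      · have hd0' : d = 0 := hd0
        exact hxB ⟨a₀, Or.inl ha₀, s', hs', by omega⟩
    · have ha0' : a = 0 := ha0
      subst ha0'
      exact absurd ⟨0, Or.inr rfl, s, hs, rfl⟩ hxB
  have hcard : D₁.ncard ≤ D₂.ncard := by
    apply Set.ncard_le_ncard_of_injOn (fun x => x - a₀) (fun x hx => (key x hx).2) ?_ hD2fin
    intro x hx y hy hxy
    have h1 := (key x hx).1
    have h2 := (key y hy).1
    simp only at hxy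
    omega
  have step2 : count (plusSet (B ∪ (fun c => c + a₀) '' T) S) m
      ≤ count (plusSet B S) m + D₁.ncard := by
    unfold count
    have hsub : (plusSet (B ∪ (fun c => c + a₀) '' T) S ∩ Set.Icc 1 m)
        ⊆ (plusSet B S ∩ Set.Icc 1 m) ∪ D₁ := by
      intro x hx
      by_cases hxB : x ∈ plusSet B S
      · exact Or.inl ⟨hxB, hx.2⟩
      · exact Or.inr ⟨hx, hxB⟩
    calc (plusSet (B ∪ (fun c => c + a₀) '' T) S ∩ Set.Icc 1 m).ncard
        ≤ ((plusSet B S ∩ Set.Icc 1 m) ∪ D₁).ncard :=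
          Set.ncard_le_ncard hsub ((finite_inter _ m).union hD1fin)
      _ ≤ (plusSet B S ∩ Set.Icc 1 m).ncard + D₁.ncard := Set.ncard_union_le _ _
  have step1 : count (plusSet (C \ T) S) m + D₂.ncard ≤ count (plusSet C S) m := by
    unfold count
    have hdisj : Disjoint (plusSet (C \ T) S ∩ Set.Icc 1 m) D₂ := by
      rw [Set.disjoint_left]
      rintro x ⟨hx, -⟩ hxD
      exact hxD.2 hx
    have hsub : (plusSet (C \ T) S ∩ Set.Icc 1 m) ∪ D₂ ⊆ plusSet C S ∩ Set.Icc 1 m := by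
      rintro x (⟨hx, hxm⟩ | hx)
      · refine ⟨?_, hxm⟩
        obtain ⟨d, hd, s, hs, rfl⟩ := hx
        refine ⟨d, ?_, s, hs, rfl⟩
        rcases hd with hd | hd
        · exact Or.inl hd.1
        · exact Or.inr hd
      · exact hx.1
    calc (plusSet (C \ T) S ∩ Set.Icc 1 m).ncard + D₂.ncard
        = ((plusSet (C \ T) S ∩ Set.Icc 1 m) ∪ D₂).ncard :=
          (Set.ncard_union_eq hdisj (finite_inter _ m) hD2fin).symm
      _ ≤ (plusSet C S ∩ Set.Icc 1 m).ncard :=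
          Set.ncard_le_ncard hsub (finite_inter _ m)
  omega

end Key

/-- Dyson's Lemma 2: the Dyson transform does not increase the rank `r`
counting functions: `φ'_r(m) ≤ φ_r(m)` for all `m = 1, …, g` and `r = 1, …, n`. -/
theorem dyson_lemma_two (n : ℕ) (hn : 2 ≤ n) (A : Fin n → Set ℕ)
    (hA : ∀ i, ∀ a ∈ A i, 0 < a) (g : ℕ) (hg : 0 < g)
    (ℓ last : Fin n) (hℓ : (ℓ : ℕ) < n - 1) (hlast : (last : ℕ) = n - 1)
    (a₀ : ℕ) (ha₀ : a₀ ∈ A ℓ)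
    (T : Set ℕ)
    (hT : T = {c | c ∈ A last ∧ 1 ≤ c ∧ c ≤ g ∧ (c + a₀ ∉ A ℓ ∨ g < c + a₀)})
    (A' : Fin n → Set ℕ)
    (hA'last : A' last = A last \ T)
    (hA'ℓ : A' ℓ = A ℓ ∪ (fun c => c + a₀) '' T)
    (hA'i : ∀ i, i ≠ ℓ → i ≠ last → A' i = A i) :
    ∀ r m : ℕ, 1 ≤ r → r ≤ n → 1 ≤ m → m ≤ g → phi A' r m ≤ phi A r m := by
  intro r m hr hrn hm hmg
  have hnl : ℓ ≠ last := by
    intro h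
    have := congrArg Fin.val h
    omega
  set σ : Finset (Fin n) → Finset (Fin n) := fun I => I.image (Equiv.swap ℓ last) with hσ
  set P := Finset.powersetCard r (Finset.univ : Finset (Fin n)) with hP
  have hσP : ∀ I ∈ P, σ I ∈ P := by
    intro I hI
    rw [hP, Finset.mem_powersetCard] at *
    exact ⟨Finset.subset_univ _,
      by rw [Finset.card_image_of_injective I (Equiv.injective _)]; exact hI.2⟩
  have hK : ∀ K : Finset (Fin n), ℓ ∉ K → last ∉ K →
      indexSumset A' K = indexSumset A K := by
    intro K h1 h2
    exact indexSumset_congr K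
      (fun i hi => hA'i i (by rintro rfl; exact h1 hi) (by rintro rfl; exact h2 hi))
  have hpos : ∀ c ∈ A last, 0 < c := fun c hc => hA last c hc
  have main : ∀ I ∈ P, count (indexSumset A' I) m + count (indexSumset A' (σ I)) m
      ≤ count (indexSumset A I) m + count (indexSumset A (σ I)) m := by
    intro I _
    by_cases hℓI : ℓ ∈ I <;> by_cases hlI : last ∈ I
    · -- both present
      have hσI : σ I = I := image_swap_eq_of_iff (iff_of_true hℓI hlI)
      rw [hσI]
      have hle : count (indexSumset A' I) m ≤ count (indexSumset A I) m := by
        set K := (I.erase ℓ).erase last with hKdef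
        have hlK : last ∉ K := Finset.notMem_erase _ _
        have hℓK : ℓ ∉ K := fun h =>
          Finset.notMem_erase ℓ I (Finset.mem_of_mem_erase h)
        have hlK2 : last ∈ I.erase ℓ := Finset.mem_erase.2 ⟨Ne.symm hnl, hlI⟩
        have hℓK' : ℓ ∉ insert last K := by
          rw [hKdef, Finset.insert_erase hlK2]
          exact Finset.notMem_erase _ _
        have hIeq : I = insert ℓ (insert last K) := by
          rw [hKdef, Finset.insert_erase hlK2, Finset.insert_erase hℓI]
        rw [hIeq, indexSumset_insert A' ℓ _ hℓK', indexSumset_insert A' last K hlK,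
            indexSumset_insert A ℓ _ hℓK', indexSumset_insert A last K hlK,
            hK K hℓK hlK, hA'ℓ, hA'last]
        apply count_mono
        intro x hx hxm
        exact both_key ha₀ hpos T hT (le_trans hxm hmg) hx
      omega
    · -- only ℓ present
      set K := I.erase ℓ with hKdef
      have hℓK : ℓ ∉ K := Finset.notMem_erase _ _
      have hlK : last ∉ K := fun h => hlI (Finset.mem_of_mem_erase h)
      have hσI : σ I = insert last K := image_swap_eq_insert hnl hℓI hlI
      have hIeq : I = insert ℓ K := (Finset.insert_erase hℓI).symm
      rw [hσI, hIeq, indexSumset_insert A' ℓ K hℓK, indexSumset_insert A' last K hlK,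
          indexSumset_insert A ℓ K hℓK, indexSumset_insert A last K hlK,
          hK K hℓK hlK, hA'ℓ, hA'last]
      exact pair_key ha₀ hmg hpos T hT
    · -- only last present
      set K := I.erase last with hKdef
      have hlK : last ∉ K := Finset.notMem_erase _ _
      have hℓK : ℓ ∉ K := fun h => hℓI (Finset.mem_of_mem_erase h)
      have hσI : σ I = insert ℓ K := by
        rw [hσ]
        simp only []
        rw [Equiv.swap_comm]
        exact image_swap_eq_insert (Ne.symm hnl) hlI hℓI
      have hIeq : I = insert last K := (Finset.insert_erase hlI).symm
      rw [hσI, hIeq, indexSumset_insert A' ℓ K hℓK, indexSumset_insert A' last K hlK,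
          indexSumset_insert A ℓ K hℓK, indexSumset_insert A last K hlK,
          hK K hℓK hlK, hA'ℓ, hA'last]
      have := pair_key (S := indexSumset A K) ha₀ hmg hpos T hT
      omega
    · -- neither present
      have hσI : σ I = I := image_swap_eq_of_iff (iff_of_false hℓI hlI)
      rw [hσI, hK I hℓI hlI]
  have hPimg : P.image σ = P := by
    apply Finset.eq_of_subset_of_card_le
    · intro J hJ
      obtain ⟨I, hI, rfl⟩ := Finset.mem_image.1 hJ
      exact hσP I hI
    · rw [Finset.card_image_of_injective _ (Finset.image_injective (Equiv.injective _))]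
  have hre : ∀ (B : Fin n → Set ℕ), ∑ I ∈ P, count (indexSumset B (σ I)) m
      = ∑ I ∈ P, count (indexSumset B I) m := by
    intro B
    conv_rhs => rw [← hPimg]
    exact (Finset.sum_image (s := P) (g := σ) (f := fun I => count (indexSumset B I) m)
      (fun x _ y _ h => Finset.image_injective (Equiv.injective _) h)).symm
  have h2 : 2 * phi A' r m ≤ 2 * phi A r m := by
    unfold phi
    rw [← hP, two_mul, two_mul]
    calc (∑ I ∈ P, count (indexSumset A' I) m) + ∑ I ∈ P, count (indexSumset A' I) m
        = (∑ I ∈ P, count (indexSumset A' I) m)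
            + ∑ I ∈ P, count (indexSumset A' (σ I)) m := by rw [hre A']
      _ = ∑ I ∈ P, (count (indexSumset A' I) m + count (indexSumset A' (σ I)) m) :=
          Finset.sum_add_distrib.symm
      _ ≤ ∑ I ∈ P, (count (indexSumset A I) m + count (indexSumset A (σ I)) m) :=
          Finset.sum_le_sum main
      _ = (∑ I ∈ P, count (indexSumset A I) m)
            + ∑ I ∈ P, count (indexSumset A (σ I)) m := Finset.sum_add_distrib
      _ = (∑ I ∈ P, count (indexSumset A I) m) + ∑ I ∈ P, count (indexSumset A I) m := by
          rw [hre A]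
  omega
end

section
/- Let n ≥ 2, let A₁, …, A_n be sets of positive integers, let g be a positive integer with A_n(g) ≥ 1, and let γ be a real number. Call a triple (a, i, c) of integers a Dyson triple if c ∈ A_n with 1 ≤ c ≤ g, 1 ≤ i ≤ n−1, (a ∈ A_i ∪ {0} or a > g), and (a + c ∉ A_i or a + c > g). Let a₀ be the smallest integer a for which (a, i, c) is a Dyson triple for some i and c, suppose a₀ ∈ A_ℓ for some fixed ℓ ∈ {1, …, n−1} such that (a₀, ℓ, c) is a Dyson triple for some c. Let T = {c ∈ A_n : 1 ≤ c ≤ g and (c + a₀ ∉ A_ℓ or c + a₀ > g)}, and define A'_n = A_n \ T, A'_ℓ = A_ℓ ∪ (T + a₀), and A'_i = A_i for all i ≠ ℓ, n. If Σ_{i=1}^{n} A_i(m) ≥ γ·m for all m = 1, …, g, then Σ_{i=1}^{n} A'_i(m) ≥ min(1, γ)·m for all m = 1, …, g. -/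
/-- `(a, i, c)` is a Dyson triple for the sets `A₁, …, A_n` (with `An` the
`n`-th set) if `c ∈ A_n` with `1 ≤ c ≤ g`, `1 ≤ i ≤ n − 1`,
(`a ∈ A_i ∪ {0}` or `a > g`), and (`a + c ∉ A_i` or `a + c > g`).
Here `i : Fin n` with `(i : ℕ) < n - 1` represents an index in `{1, …, n−1}`. -/
def IsDysonTriple {n : ℕ} (A : Fin n → Set ℕ) (An : Set ℕ) (g : ℕ)
    (a : ℕ) (i : Fin n) (c : ℕ) : Prop :=
  c ∈ An ∧ 1 ≤ c ∧ c ≤ g ∧ (i : ℕ) < n - 1 ∧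
    (a ∈ A i ∪ {0} ∨ g < a) ∧ (a + c ∉ A i ∨ g < a + c)

private lemma inter_Icc_finite (A : Set ℕ) (a b : ℕ) : (A ∩ Set.Icc a b).Finite :=
  (Set.finite_Icc a b).subset Set.inter_subset_right

private lemma count_finite (A : Set ℕ) (x : ℕ) : (A ∩ Set.Icc 1 x).Finite :=
  inter_Icc_finite A 1 x

private lemma count_split (A : Set ℕ) {c m : ℕ} (hc : 1 ≤ c) (hcm : c ≤ m) :
    count A m = count A (c - 1) + (A ∩ Set.Icc c m).ncard := by
  have hU : A ∩ Set.Icc 1 m = (A ∩ Set.Icc 1 (c - 1)) ∪ (A ∩ Set.Icc c m) := by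
    ext z
    simp only [Set.mem_inter_iff, Set.mem_union, Set.mem_Icc]
    constructor
    · rintro ⟨hz, h1, h2⟩
      by_cases hzc : z ≤ c - 1
      · exact Or.inl ⟨hz, h1, hzc⟩
      · exact Or.inr ⟨hz, by omega, h2⟩
    · rintro (⟨hz, h1, h2⟩ | ⟨hz, h1, h2⟩)
      · exact ⟨hz, h1, by omega⟩
      · exact ⟨hz, by omega, h2⟩
  have hd : Disjoint (A ∩ Set.Icc 1 (c - 1)) (A ∩ Set.Icc c m) := by
    rw [Set.disjoint_left]
    rintro z ⟨hz, h1, h2⟩ ⟨hz', h1', h2'⟩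
    omega
  rw [count, hU, Set.ncard_union_eq hd (count_finite A (c - 1)) (inter_Icc_finite A c m)]
  rfl

private lemma shift_bound {A : Set ℕ} (hA : ∀ a ∈ A, 0 < a) {c y m : ℕ}
    (hcm : c + y ≤ m) (hc : 1 ≤ c)
    (hclose : ∀ a, a ≤ y → (a = 0 ∨ a ∈ A) → a + c ∈ A) :
    count A y + 1 ≤ (A ∩ Set.Icc c m).ncard := by
  have h0 : (0 : ℕ) ∉ A ∩ Set.Icc 1 y := by
    rintro ⟨h, h1, -⟩; omega
  have hcard : (insert 0 (A ∩ Set.Icc 1 y)).ncard = count A y + 1 :=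
    Set.ncard_insert_of_notMem h0 (count_finite A y)
  have himg : (fun a => a + c) '' insert 0 (A ∩ Set.Icc 1 y) ⊆ A ∩ Set.Icc c m := by
    rintro z ⟨a, ha, rfl⟩
    show a + c ∈ A ∩ Set.Icc c m
    rcases Set.mem_insert_iff.1 ha with rfl | ⟨haA, h1, h2⟩
    · exact ⟨hclose 0 (Nat.zero_le _) (Or.inl rfl), by omega, by omega⟩
    · exact ⟨hclose a h2 (Or.inr haA), by omega, by omega⟩
  have hle := Set.ncard_le_ncard himg (inter_Icc_finite A c m)
  rwa [Set.ncard_image_of_injective _ (add_left_injective c), hcard] at hle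

private lemma count_shift {A : Set ℕ} (hA : ∀ a ∈ A, 0 < a) {c m : ℕ}
    (hc : 1 ≤ c) (hcm : c ≤ m)
    (hclose : ∀ a, a ≤ m - c → (a = 0 ∨ a ∈ A) → a + c ∈ A) :
    count A (c - 1) + count A (m - c) + 1 ≤ count A m := by
  rw [count_split A hc hcm]
  have := shift_bound hA (c := c) (y := m - c) (m := m) (by omega) hc hclose
  omega

private lemma an_split {An T : Set ℕ} (hTA : T ⊆ An) (x : ℕ) :
    (T ∩ Set.Icc 1 x).ncard + ((An \ T) ∩ Set.Icc 1 x).ncard = count An x := by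
  have hU : An ∩ Set.Icc 1 x = (T ∩ Set.Icc 1 x) ∪ ((An \ T) ∩ Set.Icc 1 x) := by
    ext z
    simp only [Set.mem_inter_iff, Set.mem_union, Set.mem_diff, Set.mem_Icc]
    constructor
    · rintro ⟨hz, hi⟩
      by_cases hzT : z ∈ T
      · exact Or.inl ⟨hzT, hi⟩
      · exact Or.inr ⟨⟨hz, hzT⟩, hi⟩
    · rintro (⟨hzT, hi⟩ | ⟨⟨hz, -⟩, hi⟩)
      · exact ⟨hTA hzT, hi⟩
      · exact ⟨hz, hi⟩
  have hd : Disjoint (T ∩ Set.Icc 1 x) ((An \ T) ∩ Set.Icc 1 x) := by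
    rw [Set.disjoint_left]
    rintro z ⟨hzT, -⟩ ⟨⟨-, hzT'⟩, -⟩
    exact hzT' hzT
  rw [count, hU, Set.ncard_union_eq hd (inter_Icc_finite _ _ _) (inter_Icc_finite _ _ _)]

private lemma countAl_bound {Al T : Set ℕ} {a₀ g m : ℕ} (hmg : m ≤ g)
    (hTl : ∀ c ∈ T, c + a₀ ∉ Al ∨ g < c + a₀) {S : Set ℕ}
    (hST : S ⊆ T) (hS1 : ∀ c ∈ S, 1 ≤ c) (hSm : ∀ c ∈ S, c + a₀ ≤ m)
    (hSfin : S.Finite) :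
    count Al m + S.ncard ≤ count (Al ∪ (fun c => c + a₀) '' T) m := by
  have himg : (fun c => c + a₀) '' S ⊆ (Al ∪ (fun c => c + a₀) '' T) ∩ Set.Icc 1 m := by
    rintro z ⟨cc, hcc, rfl⟩
    show cc + a₀ ∈ (Al ∪ (fun c => c + a₀) '' T) ∩ Set.Icc 1 m
    exact ⟨Or.inr ⟨cc, hST hcc, rfl⟩, by have := hS1 cc hcc; omega, hSm cc hcc⟩
  have hAl : Al ∩ Set.Icc 1 m ⊆ (Al ∪ (fun c => c + a₀) '' T) ∩ Set.Icc 1 m :=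
    Set.inter_subset_inter_left _ Set.subset_union_left
  have hd : Disjoint (Al ∩ Set.Icc 1 m) ((fun c => c + a₀) '' S) := by
    rw [Set.disjoint_left]
    rintro z ⟨hzAl, -, hzm⟩ ⟨cc, hcc, rfl⟩
    rcases hTl cc (hST hcc) with h | h
    · exact h hzAl
    · have := hSm cc hcc; omega
  have hsub : (Al ∩ Set.Icc 1 m) ∪ (fun c => c + a₀) '' S
      ⊆ (Al ∪ (fun c => c + a₀) '' T) ∩ Set.Icc 1 m := Set.union_subset hAl himg
  have hle := Set.ncard_le_ncard hsub (inter_Icc_finite _ 1 m)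
  rwa [Set.ncard_union_eq hd (count_finite Al m) (hSfin.image _),
    Set.ncard_image_of_injective _ (add_left_injective a₀)] at hle

/-- Dyson's Lemma 3: the Dyson transform built from the minimal element `a₀`
of a Dyson triple preserves the rank 1 density lower bound: if
`Σᵢ Aᵢ(m) ≥ γ·m` for `m = 1, …, g`, then `Σᵢ A'ᵢ(m) ≥ min(1, γ)·m`
for `m = 1, …, g`. -/
theorem dyson_lemma_three (n : ℕ) (hn : 2 ≤ n) (A : Fin n → Set ℕ)
    (hA : ∀ i, ∀ a ∈ A i, 0 < a) (g : ℕ) (hg : 0 < g) (γ : ℝ)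
    (ℓ last : Fin n) (hℓ : (ℓ : ℕ) < n - 1) (hlast : (last : ℕ) = n - 1)
    (hcount : 1 ≤ count (A last) g)
    (a₀ : ℕ)
    (ha₀min : ∀ a : ℕ, ∀ i : Fin n, ∀ c : ℕ,
      IsDysonTriple A (A last) g a i c → a₀ ≤ a)
    (ha₀ex : ∃ c : ℕ, IsDysonTriple A (A last) g a₀ ℓ c)
    (ha₀ : a₀ ∈ A ℓ)
    (T : Set ℕ)
    (hT : T = {c | c ∈ A last ∧ 1 ≤ c ∧ c ≤ g ∧ (c + a₀ ∉ A ℓ ∨ g < c + a₀)})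
    (A' : Fin n → Set ℕ)
    (hA'last : A' last = A last \ T)
    (hA'ℓ : A' ℓ = A ℓ ∪ (fun c => c + a₀) '' T)
    (hA'i : ∀ i, i ≠ ℓ → i ≠ last → A' i = A i)
    (h1 : ∀ m : ℕ, 1 ≤ m → m ≤ g → γ * m ≤ ∑ i : Fin n, (count (A i) m : ℝ)) :
    ∀ m : ℕ, 1 ≤ m → m ≤ g →
      min 1 γ * m ≤ ∑ i : Fin n, (count (A' i) m : ℝ) := by
  -- basic facts about T
  have hTsub : T ⊆ A last := by rw [hT]; rintro c ⟨h, -, -, -⟩; exact h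
  have hT1 : ∀ c ∈ T, 1 ≤ c := by rw [hT]; rintro c ⟨-, h, -, -⟩; exact h
  have hTg : ∀ c ∈ T, c ≤ g := by rw [hT]; rintro c ⟨-, -, h, -⟩; exact h
  have hTl : ∀ c ∈ T, c + a₀ ∉ A ℓ ∨ g < c + a₀ := by
    rw [hT]; rintro c ⟨-, -, -, h⟩; exact h
  have hlmem : ℓ ≠ last := by
    intro h
    rw [h, hlast] at hℓ
    omega
  have hmid : ∀ i : Fin n, i ≠ last → (i : ℕ) < n - 1 := by
    intro i hi
    have h1' : (i : ℕ) ≠ n - 1 := by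
      intro h
      exact hi (Fin.ext (h.trans hlast.symm))
    have := i.isLt
    omega
  have hℓs : ℓ ∈ Finset.univ.erase last := Finset.mem_erase.2 ⟨hlmem, Finset.mem_univ _⟩
  have hcard_s : (Finset.univ.erase last).card = n - 1 := by
    rw [Finset.card_erase_of_mem (Finset.mem_univ _), Finset.card_univ, Fintype.card_fin]
  have hμ1 : min 1 γ ≤ 1 := min_le_left _ _
  have hμγ : min 1 γ ≤ γ := min_le_right _ _
  have hn1R : (1 : ℝ) ≤ ((n - 1 : ℕ) : ℝ) := by
    have : 1 ≤ n - 1 := by omega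
    exact_mod_cast this
  -- sum decomposition
  have hdecomp : ∀ (B : Fin n → Set ℕ) (x : ℕ),
      ∑ i : Fin n, (count (B i) x : ℝ)
        = (∑ i ∈ Finset.univ.erase last, (count (B i) x : ℝ)) + (count (B last) x : ℝ) := by
    intro B x
    rw [← Finset.sum_erase_add Finset.univ _ (Finset.mem_univ last)]
  have hmidsum : ∀ (B : Fin n → Set ℕ) (x : ℕ),
      ∑ i ∈ Finset.univ.erase last, (count (B i) x : ℝ)
        = (∑ i ∈ (Finset.univ.erase last).erase ℓ, (count (B i) x : ℝ))
          + (count (B ℓ) x : ℝ) := by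
    intro B x
    rw [← Finset.sum_erase_add _ _ hℓs]
  have hA'mid : ∀ x : ℕ,
      ∑ i ∈ (Finset.univ.erase last).erase ℓ, (count (A' i) x : ℝ)
        = ∑ i ∈ (Finset.univ.erase last).erase ℓ, (count (A i) x : ℝ) :=
    fun x => Finset.sum_congr rfl fun i hi => by
      rw [hA'i i (Finset.ne_of_mem_erase hi)
        (Finset.ne_of_mem_erase (Finset.mem_of_mem_erase hi))]
  intro m hm1 hmg
  by_cases hW : ∃ c ∈ T, c ≤ m ∧ m < c + a₀
  · -- hard case
    obtain ⟨c₀, hc₀T, hc₀m, hc₀a⟩ := hW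
    have ha₀1 : 1 ≤ a₀ := by omega
    -- F1 : every element of A_n ∩ [1,g] is in every middle set
    have F1 : ∀ c ∈ A last, 1 ≤ c → c ≤ g → ∀ i : Fin n, (i : ℕ) < n - 1 → c ∈ A i := by
      intro c hc h1' h2' i hi
      by_contra hcAi
      have ht : IsDysonTriple A (A last) g 0 i c :=
        ⟨hc, h1', h2', hi, Or.inl (Set.mem_union_right _ rfl), Or.inl (by simpa using hcAi)⟩
      have := ha₀min 0 i c ht
      omega
    -- F2 : closure below a₀
    have F2 : ∀ a, a < a₀ → ∀ i : Fin n, (i : ℕ) < n - 1 → ∀ c ∈ A last, 1 ≤ c → c ≤ g →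
        (a = 0 ∨ a ∈ A i) → a + c ∈ A i ∧ a + c ≤ g := by
      intro a ha i hi c hc h1' h2' haAi
      by_contra hcon
      have h5 : a ∈ A i ∪ {0} ∨ g < a := by
        rcases haAi with rfl | h
        · exact Or.inl (Set.mem_union_right _ rfl)
        · exact Or.inl (Set.mem_union_left _ h)
      have h6 : a + c ∉ A i ∨ g < a + c := by
        by_cases hm' : a + c ∈ A i
        · by_cases hg' : a + c ≤ g
          · exact absurd ⟨hm', hg'⟩ hcon
          · exact Or.inr (by omega)
        · exact Or.inl hm'
      have := ha₀min a i c ⟨hc, h1', h2', hi, h5, h6⟩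
      omega
    -- L3 : the key lemma below a₀
    have L3 : ∀ x, x ≤ g → x < a₀ →
        min 1 γ * ((x : ℝ) + 1)
          ≤ (∑ i ∈ Finset.univ.erase last, (count (A i) x : ℝ)) + ((n - 1 : ℕ) : ℝ) := by
      intro x
      induction x using Nat.strong_induction_on with
      | _ x IH =>
        intro hxg hxa
        have hsum0 : (0 : ℝ) ≤ ∑ i ∈ Finset.univ.erase last, (count (A i) x : ℝ) :=
          Finset.sum_nonneg fun i _ => Nat.cast_nonneg _
        by_cases hμ0 : min 1 γ ≤ 0
        · have h0 : min 1 γ * ((x : ℝ) + 1) ≤ 0 :=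
            mul_nonpos_of_nonpos_of_nonneg hμ0 (by positivity)
          linarith
        push_neg at hμ0
        by_cases hAn : ∃ c, c ∈ A last ∧ 1 ≤ c ∧ c ≤ x
        · obtain ⟨c, hcA, hc1, hcx⟩ := hAn
          have key : ∀ i ∈ Finset.univ.erase last,
              count (A i) (c - 1) + count (A i) (x - c) + 1 ≤ count (A i) x := by
            intro i hi
            have hi' : (i : ℕ) < n - 1 := hmid i (Finset.ne_of_mem_erase hi)
            exact count_shift (hA i) hc1 hcx (fun a ha haA =>
              (F2 a (by omega) i hi' c hcA hc1 (le_trans hcx hxg) haA).1)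
          have keyR : (∑ i ∈ Finset.univ.erase last, (count (A i) (c - 1) : ℝ))
              + (∑ i ∈ Finset.univ.erase last, (count (A i) (x - c) : ℝ))
              + ((n - 1 : ℕ) : ℝ)
              ≤ ∑ i ∈ Finset.univ.erase last, (count (A i) x : ℝ) := by
            have hs : ∑ i ∈ Finset.univ.erase last,
                ((count (A i) (c - 1) : ℝ) + (count (A i) (x - c) : ℝ) + 1)
                ≤ ∑ i ∈ Finset.univ.erase last, (count (A i) x : ℝ) :=
              Finset.sum_le_sum fun i hi => by exact_mod_cast key i hi
            simpa [Finset.sum_add_distrib, hcard_s] using hs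
          have IH1 := IH (c - 1) (by omega) (by omega) (by omega)
          have IH2 := IH (x - c) (by omega) (by omega) (by omega)
          have e1 : ((c - 1 : ℕ) : ℝ) + 1 = (c : ℝ) := by
            rw [Nat.cast_sub hc1]; ring
          have e2 : ((x - c : ℕ) : ℝ) = (x : ℝ) - (c : ℝ) := Nat.cast_sub hcx
          rw [e1] at IH1
          rw [e2] at IH2
          have hsplit2 : min 1 γ * ((x : ℝ) + 1)
              = min 1 γ * (c : ℝ) + min 1 γ * ((x : ℝ) - (c : ℝ) + 1) := by ring
          linarith
        · -- A last has no element in [1, x]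
          have hcnt : count (A last) x = 0 := by
            rw [count, Set.ncard_eq_zero (count_finite _ _)]
            ext z
            simp only [Set.mem_inter_iff, Set.mem_Icc, Set.mem_empty_iff_false, iff_false,
              not_and]
            intro hz h1'
            intro h2'
            exact hAn ⟨z, hz, h1', h2'⟩
          rcases Nat.eq_zero_or_pos x with rfl | hx1
          · have : min 1 γ * ((0 : ℝ) + 1) ≤ 1 := by simpa using hμ1
            push_cast
            linarith
          · have hh := h1 x hx1 hxg
            rw [hdecomp A x, hcnt] at hh
            simp only [Nat.cast_zero, add_zero] at hh
            have hxx : min 1 γ * ((x : ℝ) + 1) = min 1 γ * (x : ℝ) + min 1 γ := by ring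
            have h2' : min 1 γ * (x : ℝ) ≤ γ * (x : ℝ) :=
              mul_le_mul_of_nonneg_right hμγ (Nat.cast_nonneg x)
            linarith
    -- choose c₁ = min W
    have hWne : {c | c ∈ T ∧ c ≤ m ∧ m < c + a₀}.Nonempty := ⟨c₀, hc₀T, hc₀m, hc₀a⟩
    obtain ⟨hc₁T, hc₁m, hc₁a⟩ := Nat.sInf_mem hWne
    set c₁ := sInf {c | c ∈ T ∧ c ≤ m ∧ m < c + a₀} with hc₁def
    have hc₁1 : 1 ≤ c₁ := hT1 c₁ hc₁T
    have hya : m - c₁ < a₀ := by omega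
    have hyg : m - c₁ ≤ g := by omega
    -- per middle set bound at m
    have key : ∀ i ∈ Finset.univ.erase last,
        count (A i) (c₁ - 1) + count (A i) (m - c₁) + 1 ≤ count (A i) m := by
      intro i hi
      have hi' : (i : ℕ) < n - 1 := hmid i (Finset.ne_of_mem_erase hi)
      exact count_shift (hA i) hc₁1 hc₁m (fun a ha haA =>
        (F2 a (by omega) i hi' c₁ (hTsub hc₁T) hc₁1 (hTg c₁ hc₁T) haA).1)
    have keyR : (∑ i ∈ Finset.univ.erase last, (count (A i) (c₁ - 1) : ℝ))
        + (∑ i ∈ Finset.univ.erase last, (count (A i) (m - c₁) : ℝ))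
        + ((n - 1 : ℕ) : ℝ)
        ≤ ∑ i ∈ Finset.univ.erase last, (count (A i) m : ℝ) := by
      have hs : ∑ i ∈ Finset.univ.erase last,
          ((count (A i) (c₁ - 1) : ℝ) + (count (A i) (m - c₁) : ℝ) + 1)
          ≤ ∑ i ∈ Finset.univ.erase last, (count (A i) m : ℝ) :=
        Finset.sum_le_sum fun i hi => by exact_mod_cast key i hi
      simpa [Finset.sum_add_distrib, hcard_s] using hs
    -- A'ℓ bound
    have hSm : ∀ c ∈ T ∩ Set.Icc 1 (c₁ - 1), c + a₀ ≤ m := by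
      rintro c ⟨hcT, h1', h2'⟩
      by_contra hcon
      have hcW : c ∈ {c | c ∈ T ∧ c ≤ m ∧ m < c + a₀} := ⟨hcT, by omega, by omega⟩
      have := Nat.sInf_le hcW
      omega
    have hAl := countAl_bound (Al := A ℓ) (T := T) (a₀ := a₀) hmg hTl
      Set.inter_subset_left (fun c hc => hc.2.1) hSm (inter_Icc_finite T 1 (c₁ - 1))
    rw [← hA'ℓ] at hAl
    have hAn := an_split hTsub (c₁ - 1)
    have hlastb : ((A last \ T) ∩ Set.Icc 1 (c₁ - 1)).ncard ≤ count (A' last) m := by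
      rw [hA'last]
      apply Set.ncard_le_ncard _ (count_finite _ m)
      rintro z ⟨hz, h1', h2'⟩
      exact ⟨hz, h1', by omega⟩
    -- real versions
    have hAlR : (count (A ℓ) m : ℝ) + ((T ∩ Set.Icc 1 (c₁ - 1)).ncard : ℝ)
        ≤ (count (A' ℓ) m : ℝ) := by exact_mod_cast hAl
    have hAnR : ((T ∩ Set.Icc 1 (c₁ - 1)).ncard : ℝ)
        + (((A last \ T) ∩ Set.Icc 1 (c₁ - 1)).ncard : ℝ)
        = (count (A last) (c₁ - 1) : ℝ) := by exact_mod_cast hAn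
    have hlastR : (((A last \ T) ∩ Set.Icc 1 (c₁ - 1)).ncard : ℝ)
        ≤ (count (A' last) m : ℝ) := by exact_mod_cast hlastb
    -- the counting bound for the lower part via h1
    have hγc : γ * ((c₁ - 1 : ℕ) : ℝ) ≤ ∑ i : Fin n, (count (A i) (c₁ - 1) : ℝ) := by
      rcases Nat.lt_or_ge c₁ 2 with hc2 | hc2
      · have hc₁eq : c₁ - 1 = 0 := by omega
        rw [hc₁eq]
        simp only [Nat.cast_zero, mul_zero]
        exact Finset.sum_nonneg fun i _ => Nat.cast_nonneg _
      · exact h1 (c₁ - 1) (by omega) (by omega)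
    have L3y := L3 (m - c₁) hyg hya
    -- key per-i bounds at keys
    have hmy : ((c₁ - 1 : ℕ) : ℝ) + ((m - c₁ : ℕ) : ℝ) + 1 = (m : ℝ) := by
      have : (c₁ - 1) + (m - c₁) + 1 = m := by omega
      exact_mod_cast this
    have hgoal_eq : min 1 γ * (m : ℝ)
        = min 1 γ * ((c₁ - 1 : ℕ) : ℝ) + min 1 γ * (((m - c₁ : ℕ) : ℝ) + 1) := by
      rw [← hmy]; ring
    have hμc : min 1 γ * ((c₁ - 1 : ℕ) : ℝ) ≤ γ * ((c₁ - 1 : ℕ) : ℝ) :=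
      mul_le_mul_of_nonneg_right hμγ (Nat.cast_nonneg _)
    have hd1 := hdecomp A' m
    have hd2 := hmidsum A' m
    have hd3 := hmidsum A m
    have hd4 := hdecomp A (c₁ - 1)
    have hd5 := hA'mid m
    rw [hd2, hd5] at hd1
    rw [hgoal_eq, hd1]
    linarith [hd3, hd4, keyR, hAlR, hAnR, hlastR, hγc, L3y, hμc]
  · -- easy case : the sum of counts does not decrease
    push_neg at hW
    have hSm : ∀ c ∈ T ∩ Set.Icc 1 m, c + a₀ ≤ m := by
      rintro c ⟨hcT, h1', h2'⟩
      exact hW c hcT h2'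
    have hAl := countAl_bound (Al := A ℓ) (T := T) (a₀ := a₀) hmg hTl
      Set.inter_subset_left (fun c hc => hc.2.1) hSm (inter_Icc_finite T 1 m)
    rw [← hA'ℓ] at hAl
    have hAn := an_split hTsub m
    have hlasteq : count (A' last) m = ((A last \ T) ∩ Set.Icc 1 m).ncard := by
      rw [hA'last]; rfl
    have hAlR : (count (A ℓ) m : ℝ) + ((T ∩ Set.Icc 1 m).ncard : ℝ)
        ≤ (count (A' ℓ) m : ℝ) := by exact_mod_cast hAl
    have hAnR : ((T ∩ Set.Icc 1 m).ncard : ℝ) + (((A last \ T) ∩ Set.Icc 1 m).ncard : ℝ)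
        = (count (A last) m : ℝ) := by exact_mod_cast hAn
    have hlastR : (count (A' last) m : ℝ) = (((A last \ T) ∩ Set.Icc 1 m).ncard : ℝ) := by
      exact_mod_cast hlasteq
    have hγm := h1 m hm1 hmg
    have hμm : min 1 γ * (m : ℝ) ≤ γ * (m : ℝ) :=
      mul_le_mul_of_nonneg_right hμγ (Nat.cast_nonneg _)
    have hd1 := hdecomp A' m
    have hd2 := hmidsum A' m
    have hd3 := hmidsum A m
    have hd4 := hdecomp A m
    have hd5 := hA'mid m
    rw [hd2, hd5] at hd1
    rw [hd1]
    linarith [hd3, hd4]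
end

section
/- Let A and B be sets of integers with 0 ∈ A and 0 ∈ B. If σ(A) = α and σ(B) = β, then σ(A + B) ≥ α + β − α·β. -/
/-- The counting function of a set of integers: `countZ A x` is the number of
elements `a ∈ A` with `1 ≤ a ≤ x`. -/
noncomputable def countZ (A : Set ℤ) (x : ℕ) : ℕ := (A ∩ Set.Icc 1 (x : ℤ)).ncard

/-- The Shnirel'man density of a set of integers: `σ(A) = inf_{n ≥ 1} A(n)/n`. -/
noncomputable def shnirelmannZ (A : Set ℤ) : ℝ :=
  ⨅ n : ℕ+, (countZ A n : ℝ) / ((n : ℕ) : ℝ)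

/-- The sumset of two sets of integers: all integers of the form
`a + b` with `a ∈ A ∪ {0}` and `b ∈ B ∪ {0}`. -/
def sumsetZ (A B : Set ℤ) : Set ℤ :=
  {n | ∃ a ∈ A ∪ {0}, ∃ b ∈ B ∪ {0}, n = a + b}

/-!
Let `a ≤ n` be the last element of `A ∪ {0}` up to `n`. Every `m ∈ (a, n]` with `m - a ∈ B` lies
in `A + B`, which gives at least `β (n - a)` elements of `A + B` in `(a, n]`; if `a > 0`, then `a`
itself is one more element, and the part below `a` is handled by strong induction. Adding up,
`(A + B)(n) ≥ β n + (1 - β) A(n)`, and `A(n) ≥ α n` with `β ≤ 1` turns this into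
`(A + B)(n) ≥ (α + β - α β) n`.
-/

open Finset
open scoped Classical

lemma countZ_eq_card_filter_range (S : Set ℤ) (n : ℕ) :
    countZ S n = #{i ∈ range n | ((i + 1 : ℕ) : ℤ) ∈ S} := by
  rw [countZ, ← Set.ncard_coe_finset,
    ← Set.ncard_image_of_injective _ ((Nat.cast_injective (R := ℤ)).comp Nat.succ_injective)]
  congr 1
  ext m
  simp only [Set.mem_inter_iff, Set.mem_Icc, coe_filter, mem_range, Set.mem_image,
    Set.mem_ofPred_eq, Function.comp_apply, Nat.succ_eq_add_one]
  constructor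
  · rintro ⟨hm, h1, hn⟩
    exact ⟨(m - 1).toNat, ⟨by omega, by rwa [show (((m - 1).toNat + 1 : ℕ) : ℤ) = m by omega]⟩,
      by omega⟩
  · rintro ⟨i, ⟨hi, hS⟩, rfl⟩
    exact ⟨hS, by omega, by omega⟩

lemma countZ_zero (S : Set ℤ) : countZ S 0 = 0 := by
  simp [countZ_eq_card_filter_range]

lemma countZ_le_self (S : Set ℤ) (n : ℕ) : countZ S n ≤ n := by
  rw [countZ_eq_card_filter_range]
  exact (card_filter_le _ _).trans (card_range n).le

lemma countZ_add (S : Set ℤ) (m k : ℕ) :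
    countZ S (m + k) = countZ S m + countZ ((fun t => (m : ℤ) + t) ⁻¹' S) k := by
  simp only [countZ_eq_card_filter_range, card_filter, sum_range_add, Set.mem_preimage]
  push_cast
  simp only [add_assoc]

lemma countZ_succ (S : Set ℤ) (n : ℕ) :
    countZ S (n + 1) = countZ S n + if ((n + 1 : ℕ) : ℤ) ∈ S then 1 else 0 := by
  simp only [countZ_eq_card_filter_range, card_filter, sum_range_succ]

lemma countZ_mono {S T : Set ℤ} (h : S ⊆ T) (n : ℕ) : countZ S n ≤ countZ T n := by
  simp only [countZ_eq_card_filter_range]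
  exact card_le_card (monotone_filter_right _ fun _ _ hi => h hi)

lemma countZ_eq_of_notMem {S : Set ℤ} {m n : ℕ} (hmn : m ≤ n)
    (h : ∀ k : ℕ, m < k → k ≤ n → (k : ℤ) ∉ S) : countZ S n = countZ S m := by
  obtain ⟨d, rfl⟩ := Nat.exists_eq_add_of_le hmn
  rw [countZ_add, countZ_eq_card_filter_range _ d, add_eq_left, card_eq_zero, filter_eq_empty_iff]
  intro i hi
  simpa [← add_assoc] using h (m + i + 1) (by omega) (by simp at hi; omega)

lemma add_mem_sumsetZ {A B : Set ℤ} {a b : ℤ} (ha : a ∈ A ∪ {0}) (hb : b ∈ B ∪ {0}) :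
    a + b ∈ sumsetZ A B :=
  ⟨a, ha, b, hb, rfl⟩

lemma exists_le_mem_countZ_eq (A : Set ℤ) (n : ℕ) :
    ∃ a ≤ n, (a : ℤ) ∈ A ∪ {0} ∧ countZ A n = countZ A a := by
  refine ⟨Nat.findGreatest (fun k : ℕ => (k : ℤ) ∈ A) n, Nat.findGreatest_le n, ?_,
    countZ_eq_of_notMem (Nat.findGreatest_le n) fun k hk hkn => Nat.findGreatest_is_greatest hk hkn⟩
  rcases eq_or_ne (Nat.findGreatest (fun k : ℕ => (k : ℤ) ∈ A) n) 0 with h | h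
  · simp [h]
  · exact Or.inl (Nat.findGreatest_of_ne_zero rfl h)

lemma le_countZ_sumsetZ (A B : Set ℤ) {β : ℝ} (hB : ∀ k : ℕ, β * k ≤ countZ B k) (n : ℕ) :
    β * n + (1 - β) * countZ A n ≤ countZ (sumsetZ A B) n := by
  induction n using Nat.strong_induction_on with
  | _ n ih =>
  obtain ⟨a, han, haA, hA⟩ := exists_le_mem_countZ_eq A n
  obtain ⟨d, rfl⟩ := Nat.exists_eq_add_of_le han
  have hBd : β * d ≤ countZ ((fun t => (a : ℤ) + t) ⁻¹' sumsetZ A B) d :=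
    (hB d).trans (mod_cast countZ_mono (fun b hb => add_mem_sumsetZ haA (Or.inl hb)) d)
  rw [hA, countZ_add]
  generalize countZ ((fun t => (a : ℤ) + t) ⁻¹' sumsetZ A B) d = m at hBd ⊢
  push_cast
  cases a with
  | zero =>
    simp only [countZ_zero]
    push_cast
    linarith
  | succ c =>
    have hcA : ((c + 1 : ℕ) : ℤ) ∈ A := haA.resolve_right (by simp; omega)
    have hcS : ((c + 1 : ℕ) : ℤ) ∈ sumsetZ A B := by
      simpa using add_mem_sumsetZ (Or.inl hcA) (Or.inr rfl : (0 : ℤ) ∈ B ∪ {0})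
    rw [countZ_succ, countZ_succ, if_pos hcA, if_pos hcS]
    have := ih c (by omega)
    push_cast
    linarith

lemma shnirelmannZ_mul_le_countZ (A : Set ℤ) (n : ℕ) : shnirelmannZ A * n ≤ countZ A n := by
  rcases Nat.eq_zero_or_pos n with rfl | hn
  · simp
  · have hle : shnirelmannZ A ≤ countZ A n / n :=
      ciInf_le ⟨0, by rintro _ ⟨k, rfl⟩; positivity⟩ (⟨n, hn⟩ : ℕ+)
    exact (le_div_iff₀ (by positivity)).mp hle

lemma shnirelmannZ_le_one (A : Set ℤ) : shnirelmannZ A ≤ 1 := by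
  simpa using (shnirelmannZ_mul_le_countZ A 1).trans (mod_cast countZ_le_self A 1)

lemma le_shnirelmannZ {A : Set ℤ} {c : ℝ} (h : ∀ n : ℕ, c * n ≤ countZ A n) :
    c ≤ shnirelmannZ A :=
  le_ciInf fun n => (le_div_iff₀ (mod_cast n.pos)).mpr (h n)

theorem shnirelmann_inequality_general (A B : Set ℤ) (α β : ℝ)
    (hα : shnirelmannZ A = α) (hβ : shnirelmannZ B = β) :
    α + β - α * β ≤ shnirelmannZ (sumsetZ A B) := by
  have hA : ∀ n : ℕ, α * n ≤ countZ A n := hα ▸ shnirelmannZ_mul_le_countZ A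
  have hB : ∀ n : ℕ, β * n ≤ countZ B n := hβ ▸ shnirelmannZ_mul_le_countZ B
  have hβ1 : 0 ≤ 1 - β := sub_nonneg.2 (hβ ▸ shnirelmannZ_le_one B)
  refine le_shnirelmannZ fun n => ?_
  calc (α + β - α * β) * n = β * n + (1 - β) * (α * n) := by ring
    _ ≤ β * n + (1 - β) * countZ A n := by gcongr; exact hA n
    _ ≤ countZ (sumsetZ A B) n := le_countZ_sumsetZ A B hB n

/-- Shnirel'man's inequality: for sets `A`, `B` of integers with `0 ∈ A ∩ B`,
if `σ(A) = α` and `σ(B) = β`, then `σ(A + B) ≥ α + β − αβ`. -/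
theorem shnirelmann_inequality (A B : Set ℤ)
    (h0A : (0 : ℤ) ∈ A) (h0B : (0 : ℤ) ∈ B) (α β : ℝ)
    (hα : shnirelmannZ A = α) (hβ : shnirelmannZ B = β) :
    α + β - α * β ≤ shnirelmannZ (sumsetZ A B) :=
  shnirelmann_inequality_general A B α β hα hβ
end

section
/- Let A be a set of positive integers with σ(A) ≥ 1/2. Then every positive integer n belongs to the sumset 2A = A + A; that is, A is a basis of order 2. -/
/-- The Shnirel'man density of a set of integers: `σ(A) = inf_{n ≥ 1} A(n)/n`. -/
noncomputable def shnirelmann (A : Set ℕ) : ℝ :=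
  ⨅ n : ℕ+, (count A n : ℝ) / ((n : ℕ) : ℝ)

open Classical in
lemma count_eq (A : Set ℕ) (n : ℕ) :
    count A n = ((Finset.Icc 1 n).filter (· ∈ A)).card := by
  rw [count]
  have : A ∩ Set.Icc 1 n = ↑((Finset.Icc 1 n).filter (· ∈ A)) := by
    ext a
    simp [Finset.mem_filter, Finset.mem_Icc, Set.mem_Icc]
    tauto
  rw [this, Set.ncard_coe_finset]

/-- If `A` is a set of positive integers with `σ(A) ≥ 1/2`, then every
positive integer belongs to `2A = A + A`; that is, `A` is a basis of order 2. -/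
theorem basis_order_two (A : Set ℕ) (hA : ∀ a ∈ A, 0 < a)
    (h : (1 : ℝ) / 2 ≤ shnirelmann A) :
    ∀ n : ℕ, 0 < n → n ∈ sumset A A := by
  classical
  have hbdd : BddBelow (Set.range fun n : ℕ+ => (count A n : ℝ) / ((n : ℕ) : ℝ)) := by
    refine ⟨0, ?_⟩
    rintro x ⟨m, rfl⟩
    positivity
  have key : ∀ n : ℕ, 0 < n → n ≤ 2 * count A n := by
    intro n hn
    have h1 : (1 : ℝ) / 2 ≤ (count A n : ℝ) / ((n : ℕ) : ℝ) :=
      h.trans (ciInf_le hbdd (⟨n, hn⟩ : ℕ+))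
    have hn' : (0 : ℝ) < (n : ℝ) := by exact_mod_cast hn
    rw [div_le_div_iff₀ (by norm_num) hn'] at h1
    have : (n : ℝ) ≤ 2 * (count A n : ℝ) := by linarith
    exact_mod_cast this
  intro n hn
  by_cases hnA : n ∈ A
  · exact ⟨n, Or.inl hnA, 0, Or.inr rfl, rfl⟩
  · -- pigeonhole
    set F : Finset ℕ := (Finset.Icc 1 n).filter (· ∈ A) with hF
    have hcard : count A n = F.card := count_eq A n
    have hFmem : ∀ a ∈ F, a ∈ A ∧ 1 ≤ a ∧ a ≤ n - 1 := by
      intro a ha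
      rw [hF, Finset.mem_filter, Finset.mem_Icc] at ha
      refine ⟨ha.2, ha.1.1, ?_⟩
      have : a ≠ n := fun e => hnA (e ▸ ha.2)
      omega
    set T : Finset ℕ := F.image (n - ·) with hT
    have hTcard : T.card = F.card := by
      rw [hT]
      apply Finset.card_image_of_injOn
      intro a ha b hb hab
      simp only at hab
      have h1 := hFmem a ha
      have h2 := hFmem b hb
      omega
    have hsub : F ∪ T ⊆ Finset.Icc 1 (n - 1) := by
      intro x hx
      rw [Finset.mem_union] at hx
      rcases hx with hx | hx
      · have := hFmem x hx
        rw [Finset.mem_Icc]; omega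
      · rw [hT, Finset.mem_image] at hx
        obtain ⟨a, ha, rfl⟩ := hx
        have := hFmem a ha
        rw [Finset.mem_Icc]; omega
    have hle : (F ∪ T).card ≤ n - 1 := by
      calc (F ∪ T).card ≤ (Finset.Icc 1 (n-1)).card := Finset.card_le_card hsub
      _ = n - 1 := by rw [Nat.card_Icc]; omega
    have hinter : (F ∩ T).Nonempty := by
      by_contra hne
      rw [Finset.not_nonempty_iff_eq_empty] at hne
      have := Finset.card_union_add_card_inter F T
      rw [hne] at this
      simp at this
      have hk := key n hn
      omega
    obtain ⟨b, hb⟩ := hinter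
    rw [Finset.mem_inter] at hb
    obtain ⟨hbF, hbT⟩ := hb
    rw [hT, Finset.mem_image] at hbT
    obtain ⟨a, haF, hab⟩ := hbT
    have h1 := hFmem a haF
    have h2 := hFmem b hbF
    exact ⟨a, Or.inl h1.1, b, Or.inl h2.1, by omega⟩
end

section
/- Let m ≥ 2 be an integer and let A and B be nonempty subsets of ℤ/mℤ. If 0 ∈ B and every nonzero element b of B is represented by an integer coprime to m, then |A + B| ≥ min(m, |A| + |B| − 1). -/
open Pointwise Finset

lemma add_closed_univ {m : ℕ} [NeZero m] {A : Finset (ZMod m)} {b : ZMod m}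
    (hA : A.Nonempty) (hb : IsUnit b) (hcl : ∀ a ∈ A, a + b ∈ A) :
    A = Finset.univ := by
  have key : ∀ (k : ℕ) (a : ZMod m), a ∈ A → a + k • b ∈ A := by
    intro k
    induction k with
    | zero => simp
    | succ n ih =>
      intro a ha
      have := hcl _ (ih a ha)
      simpa [succ_nsmul, add_assoc, add_mul] using this
  obtain ⟨a0, ha0⟩ := hA
  ext z
  simp only [Finset.mem_univ, iff_true]
  obtain ⟨u, rfl⟩ := hb
  set k : ℕ := ((z - a0) * ↑u⁻¹).val with hk
  have hzk : a0 + k • (u : ZMod m) = z := by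
    have : ((k : ℕ) : ZMod m) = (z - a0) * ↑u⁻¹ := by
      simp [hk, ZMod.natCast_val, ZMod.cast_id]
    rw [nsmul_eq_mul, this, mul_assoc, Units.inv_mul, mul_one]
    ring
  rw [← hzk]
  exact key k a0 ha0

lemma chowla_aux (m : ℕ) (hm : 2 ≤ m) :
    ∀ n (A B : Finset (ZMod m)), B.card ≤ n → A.Nonempty → (0 : ZMod m) ∈ B →
    (∀ b ∈ B, b ≠ 0 → Nat.Coprime (ZMod.val b) m) →
    min m (A.card + B.card - 1) ≤ (A + B).card := by
  haveI : NeZero m := ⟨by omega⟩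
  intro n
  induction n with
  | zero =>
    intro A B hcard _ h0 _
    exact absurd (card_pos.2 ⟨0, h0⟩) (by omega)
  | succ n ih =>
    intro A B hcard hA h0 hcop
    have hAsub : A ⊆ A + B := fun a ha => by
      simpa using add_mem_add ha h0
    by_cases hB1 : B = {0}
    · subst hB1
      calc min m (A.card + ({(0:ZMod m)} : Finset (ZMod m)).card - 1) ≤ A.card := by simp
        _ ≤ (A + {0}).card := card_le_card hAsub
    · obtain ⟨b, hbB, hb0⟩ : ∃ b ∈ B, b ≠ 0 := by
        by_contra hc
        push_neg at hc
        exact hB1 (Finset.eq_singleton_iff_unique_mem.2 ⟨h0, hc⟩)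
      by_cases hcl : ∀ a ∈ A, ∀ b ∈ B, a + b ∈ A
      · -- A is closed under adding B; since b is a unit, A = univ
        have hbu : IsUnit b := by
          have := (ZMod.isUnit_iff_coprime b.val m).2 (hcop b hbB hb0)
          rwa [ZMod.natCast_val, ZMod.cast_id] at this
        have hAuniv : A = Finset.univ :=
          add_closed_univ hA hbu (fun a ha => hcl a ha b hbB)
        have : (m : ℕ) ≤ (A + B).card := by
          calc m = (Finset.univ : Finset (ZMod m)).card := by simp [ZMod.card]
            _ = A.card := by rw [hAuniv]
            _ ≤ (A + B).card := card_le_card hAsub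
        exact le_trans (min_le_left _ _) this
      · push_neg at hcl
        obtain ⟨a, haA, c, hcB, hacA⟩ := hcl
        set B' : Finset (ZMod m) := B.filter (fun y => a + y ∈ A) with hB'
        set C : Finset (ZMod m) := B.image (a + ·) with hC
        set A' : Finset (ZMod m) := A ∪ C with hA'
        have hB'B : B' ⊆ B := filter_subset _ _
        have h0B' : (0 : ZMod m) ∈ B' := by
          simp [hB', mem_filter, h0, haA]
        have hcnot : c ∉ B' := by
          simp [hB', mem_filter, hacA]
        have hB'lt : B'.card < B.card :=
          card_lt_card (ssubset_iff_of_subset hB'B |>.2 ⟨c, hcB, hcnot⟩)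
        have hCcard : C.card = B.card :=
          card_image_of_injective _ (add_right_injective a)
        have hCA : C ∩ A = B'.image (a + ·) := by
          ext x
          simp only [hC, hB', mem_inter, mem_image, mem_filter]
          constructor
          · rintro ⟨⟨y, hy, rfl⟩, hx⟩
            exact ⟨y, ⟨hy, hx⟩, rfl⟩
          · rintro ⟨y, ⟨hy, hx⟩, rfl⟩
            exact ⟨⟨y, hy, rfl⟩, hx⟩
        have hB'card : B'.card = (C ∩ A).card := by
          rw [hCA, card_image_of_injective _ (add_right_injective a)]
        have hsum : A'.card + B'.card = A.card + B.card := by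
          rw [hB'card, hA', ← hCcard, inter_comm]
          exact card_union_add_card_inter A C
        have hsubset : A' + B' ⊆ A + B := by
          intro x hx
          rw [Finset.mem_add] at hx
          obtain ⟨u, hu, v, hv, rfl⟩ := hx
          rcases Finset.mem_union.1 hu with hu | hu
          · exact add_mem_add hu (hB'B hv)
          · obtain ⟨y, hy, rfl⟩ := Finset.mem_image.1 hu
            have hav : a + v ∈ A := (mem_filter.1 hv).2
            have : (a + v) + y ∈ A + B := add_mem_add hav hy
            simpa [add_comm, add_left_comm, add_assoc] using this
        have hIH := ih A' B' (by omega) (hA.mono subset_union_left) h0B'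
          (fun b hb hb0 => hcop b (hB'B hb) hb0)
        rw [hsum] at hIH
        exact le_trans hIH (card_le_card hsubset)

/-- I. Chowla's theorem: let `m ≥ 2` and let `A`, `B` be nonempty subsets of
`ℤ/mℤ`. If `0 ∈ B` and `gcd(b, m) = 1` for all nonzero `b ∈ B`, then
`|A + B| ≥ min(m, |A| + |B| − 1)`. -/
theorem chowla_theorem (m : ℕ) (hm : 2 ≤ m)
    (A B : Finset (ZMod m)) (hA : A.Nonempty) (hB : B.Nonempty)
    (h0 : (0 : ZMod m) ∈ B)
    (hcop : ∀ b ∈ B, b ≠ 0 → Nat.Coprime (ZMod.val b) m) :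
    min m (A.card + B.card - 1) ≤ (A + B).card :=
  chowla_aux m hm B.card A B le_rfl hA h0 hcop
end

section
/- Let G be an additive abelian group and let A and B be finite nonempty subsets of G. If |A| + |B| ≤ |G| (interpreted as automatically true when G is infinite), then there exists a proper subgroup H of G such that |A + B| ≥ |A| + |B| − |H|. -/
open Pointwise

private lemma kneser_aux {G : Type*} [AddCommGroup G] [DecidableEq G] :
    ∀ n (A B : Finset G), B.card ≤ n → A.Nonempty → B.Nonempty →
    (Finite G → A.card + B.card ≤ Nat.card G) →
    ∃ H : AddSubgroup G, H ≠ ⊤ ∧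
      A.card + B.card ≤ (A + B).card + Nat.card H := by
  intro n
  induction n with
  | zero => intro A B hn hA hB _; exact absurd (Finset.card_pos.mpr hB) (by omega)
  | succ n ih =>
    intro A B hn hA hB hcard
    classical
    by_cases hc : ∀ a ∈ A, ∀ b ∈ B, ∀ b' ∈ B, b' + a - b ∈ A
    · -- absorbed case
      obtain ⟨a0, ha0⟩ := hA
      obtain ⟨b0, hb0⟩ := id hB
      -- the subgroup of elements absorbing A
      have hneg : ∀ g : G, (∀ a ∈ A, a + g ∈ A) → ∀ a ∈ A, a + (-g) ∈ A := by
        intro g hg a ha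
        have hsub : A.image (· + g) ⊆ A := by
          intro x hx
          obtain ⟨y, hy, rfl⟩ := Finset.mem_image.mp hx
          exact hg y hy
        have himg : A.image (· + g) = A :=
          Finset.eq_of_subset_of_card_le hsub
            (by rw [Finset.card_image_of_injective _ (add_left_injective g)])
        rw [← himg] at ha
        obtain ⟨y, hy, hxy⟩ := Finset.mem_image.mp ha
        have : a + -g = y := by rw [← hxy]; abel
        rwa [this]
      set K : AddSubgroup G :=
        { carrier := {g | ∀ a ∈ A, a + g ∈ A}
          zero_mem' := by intro a ha; simpa using ha
          add_mem' := by
            intro x y hx hy a ha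
            rw [← add_assoc]
            exact hy _ (hx a ha)
          neg_mem' := by intro x hx; exact hneg x hx } with hK
      set H : AddSubgroup G := AddSubgroup.closure ((B : Set G) - (B : Set G)) with hH
      have hHK : H ≤ K := by
        rw [hH]
        apply AddSubgroup.closure_le K |>.mpr
        rintro g ⟨b1, hb1, b2, hb2, rfl⟩
        intro a ha
        have := hc a ha b2 hb2 b1 hb1
        have he : a + (b1 - b2) = b1 + a - b2 := by abel
        rwa [he]
      -- H is contained in the finite set A - a0
      set HF : Finset G := (A.image (· - a0)).filter (· ∈ H) with hHF
      have hsetH : (H : Set G) = ↑HF := by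
        ext g
        simp only [hHF, Finset.coe_filter, Set.mem_setOf_eq, Finset.mem_image,
          Finset.mem_coe, SetLike.mem_coe]
        constructor
        · intro hg
          refine ⟨⟨a0 + g, hHK hg a0 ha0, by abel⟩, hg⟩
        · exact fun h => h.2
      have hcardH : Nat.card H = HF.card := by
        have : Nat.card H = ((H : Set G)).ncard := Nat.card_coe_set_eq _
        rw [this, hsetH, Set.ncard_coe_finset]
      have hBH : B.card ≤ HF.card := by
        apply Finset.card_le_card_of_injOn (fun x => x - b0)
        · intro x hx
          have hmem : x - b0 ∈ H := by
            rw [hH]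
            exact AddSubgroup.subset_closure ⟨x, hx, b0, hb0, rfl⟩
          have : (x - b0) ∈ (H : Set G) := hmem
          rw [hsetH] at this
          exact_mod_cast this
        · intro x _ y _ h
          have := sub_left_injective h
          exact this
      have hAB : A.card ≤ (A + B).card := Finset.card_le_card_add_right hB
      refine ⟨H, ?_, ?_⟩
      · intro htop
        have huniv : (Set.univ : Set G) = ↑HF := by
          rw [← hsetH, htop, AddSubgroup.coe_top]
        have hfin : Finite G := by
          rw [← Set.finite_univ_iff]
          rw [huniv]
          exact HF.finite_toSet
        have hGcard : Nat.card H = Nat.card G := by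
          rw [htop]; exact Nat.card_congr AddSubgroup.topEquiv.toEquiv
        have hHA : HF.card ≤ A.card := by
          calc HF.card ≤ (A.image (· - a0)).card := Finset.card_le_card (Finset.filter_subset _ _)
            _ ≤ A.card := Finset.card_image_le
        have := hcard hfin
        rw [← hGcard, hcardH] at this
        have hBpos := Finset.card_pos.mpr hB
        omega
      · rw [hcardH]; omega
    · -- transform case
      push_neg at hc
      obtain ⟨a, ha, b, hb, b', hb', hab⟩ := hc
      set g : G := a - b with hg
      set A' : Finset G := A ∪ B.image (· + g) with hA'
      set B' : Finset G := B.filter (fun x => x + g ∈ A) with hB'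
      have hbB' : b ∈ B' := by
        rw [hB', Finset.mem_filter]
        exact ⟨hb, by rw [hg]; simpa using ha⟩
      have hB'B : B' ⊆ B := Finset.filter_subset _ _
      have hb'notB' : b' ∉ B' := by
        rw [hB', Finset.mem_filter]
        rintro ⟨-, h⟩
        apply hab
        have : b' + g = b' + a - b := by rw [hg]; abel
        rwa [this] at h
      have hssub : B' ⊂ B := Finset.ssubset_iff_of_subset hB'B |>.mpr ⟨b', hb', hb'notB'⟩
      have hcardlt : B'.card < B.card := Finset.card_lt_card hssub
      -- card equality
      have hbij : (B.image (· + g)) \ A = (B.filter (fun x => x + g ∉ A)).image (· + g) := by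
        ext x
        simp only [Finset.mem_sdiff, Finset.mem_image, Finset.mem_filter]
        constructor
        · rintro ⟨⟨y, hy, rfl⟩, hx⟩
          exact ⟨y, ⟨hy, hx⟩, rfl⟩
        · rintro ⟨y, ⟨hy, hyA⟩, rfl⟩
          exact ⟨⟨y, hy, rfl⟩, hyA⟩
      have hcards : A'.card + B'.card = A.card + B.card := by
        have h1 : A'.card = ((B.image (· + g)) \ A).card + A.card := by
          rw [hA', Finset.union_comm, ← Finset.card_sdiff_add_card]
        have h2 : B'.card + (B.filter (fun x => x + g ∉ A)).card = B.card := by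
          rw [hB']
          exact Finset.card_filter_add_card_filter_not _
        have h3 : ((B.image (· + g)) \ A).card = (B.filter (fun x => x + g ∉ A)).card := by
          rw [hbij, Finset.card_image_of_injective _ (add_left_injective g)]
        omega
      have hsub : A' + B' ⊆ A + B := by
        intro x hx
        obtain ⟨u, hu, v, hv, rfl⟩ := Finset.mem_add.mp hx
        rw [hB', Finset.mem_filter] at hv
        rw [hA', Finset.mem_union] at hu
        rcases hu with hu | hu
        · exact Finset.add_mem_add hu hv.1
        · obtain ⟨w, hw, rfl⟩ := Finset.mem_image.mp hu
          have : w + g + v = (v + g) + w := by abel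
          rw [this]
          exact Finset.add_mem_add hv.2 hw
      have hA'ne : A'.Nonempty := hA.mono (by rw [hA']; exact Finset.subset_union_left)
      have hB'ne : B'.Nonempty := ⟨b, hbB'⟩
      obtain ⟨H, hHtop, hHcard⟩ := ih A' B' (by omega) hA'ne hB'ne
        (fun hfin => by rw [hcards]; exact hcard hfin)
      refine ⟨H, hHtop, ?_⟩
      have := Finset.card_le_card hsub
      omega

/-- Kneser's addition theorem (simple form): let `A` and `B` be finite
nonempty subsets of an abelian group `G`. If `|A| + |B| ≤ |G|` (automatically
true when `G` is infinite), then there is a proper subgroup `H` of `G` with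
`|A + B| ≥ |A| + |B| − |H|`. -/
theorem kneser_simple {G : Type*} [AddCommGroup G] [DecidableEq G]
    (A B : Finset G) (hA : A.Nonempty) (hB : B.Nonempty)
    (hcard : Finite G → A.card + B.card ≤ Nat.card G) :
    ∃ H : AddSubgroup G, H ≠ ⊤ ∧
      A.card + B.card ≤ (A + B).card + Nat.card H := by
  exact kneser_aux B.card A B le_rfl hA hB hcard
end
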